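/- There exists a 𝕂(q)-algebra antihomomorphism S: U' → U' satisfying S(X) = X^{-1}, S(Y) = 1 + X - YX, S(Z) = 1 + X - ZX; moreover, under the isomorphism θ: U' → U_q(sl2) given by θ(X^{±1}) = K^{±1}, θ(Y) = K^{-1} + F(q - q^{-1}), θ(Z) = K^{-1} - K^{-1}Eq(q - q^{-1}), S corresponds to the standard antipode of U_q(sl2), i.e. θ ∘ S = S_std ∘ θ, where S_std(E) = -K^{-1}E, S_std(F) = -FK, S_std(K) = K^{-1}. -/

import Mathlib

open FreeAlgebra
open scoped TensorProduct

noncomputable section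

/-- The field `𝕂(q)` of rational functions in the indeterminate `q` over `𝕂`. -/
abbrev Kq (K : Type) [Field K] : Type := RatFunc K

/-- The indeterminate `q` viewed as an element of `𝕂(q)`. -/
def qv (K : Type) [Field K] : Kq K := RatFunc.X

/-- Generators `E, F, K, K⁻¹` for the Chevalley presentation of `U_q(sl₂)`. -/
inductive SGen : Type | E | F | K | Kinv

/-- Generators `X, X⁻¹, Y, Z` for the equitable presentation. -/
inductive TGen : Type | X | Xinv | Y | Z

/-- The defining relations of `U_q(sl₂)` in the Chevalley presentation. -/
inductive SRel (K : Type) [Field K] :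
    FreeAlgebra (Kq K) SGen → FreeAlgebra (Kq K) SGen → Prop
  | r1a : SRel K (ι (Kq K) SGen.K * ι (Kq K) SGen.Kinv) 1
  | r1b : SRel K (ι (Kq K) SGen.Kinv * ι (Kq K) SGen.K) 1
  | r2 : SRel K (ι (Kq K) SGen.K * ι (Kq K) SGen.E * ι (Kq K) SGen.Kinv)
      ((qv K ^ 2) • ι (Kq K) SGen.E)
  | r3 : SRel K (ι (Kq K) SGen.K * ι (Kq K) SGen.F * ι (Kq K) SGen.Kinv)
      ((qv K ^ (-2 : ℤ)) • ι (Kq K) SGen.F)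
  | r4 : SRel K (ι (Kq K) SGen.E * ι (Kq K) SGen.F - ι (Kq K) SGen.F * ι (Kq K) SGen.E)
      ((qv K - (qv K)⁻¹)⁻¹ • (ι (Kq K) SGen.K - ι (Kq K) SGen.Kinv))

/-- The defining relations of the equitable presentation. -/
inductive TRel (K : Type) [Field K] :
    FreeAlgebra (Kq K) TGen → FreeAlgebra (Kq K) TGen → Prop
  | e1a : TRel K (ι (Kq K) TGen.X * ι (Kq K) TGen.Xinv) 1
  | e1b : TRel K (ι (Kq K) TGen.Xinv * ι (Kq K) TGen.X) 1
  | e2 : TRel K ((qv K - (qv K)⁻¹)⁻¹ •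
      (qv K • (ι (Kq K) TGen.X * ι (Kq K) TGen.Y) -
        (qv K)⁻¹ • (ι (Kq K) TGen.Y * ι (Kq K) TGen.X))) 1
  | e3 : TRel K ((qv K - (qv K)⁻¹)⁻¹ •
      (qv K • (ι (Kq K) TGen.Y * ι (Kq K) TGen.Z) -
        (qv K)⁻¹ • (ι (Kq K) TGen.Z * ι (Kq K) TGen.Y))) 1
  | e4 : TRel K ((qv K - (qv K)⁻¹)⁻¹ •
      (qv K • (ι (Kq K) TGen.Z * ι (Kq K) TGen.X) -
        (qv K)⁻¹ • (ι (Kq K) TGen.X * ι (Kq K) TGen.Z))) 1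

/-- `U_q(sl₂)` with the Chevalley presentation. -/
abbrev Usl2 (K : Type) [Field K] := RingQuot (SRel K)

/-- The algebra `U'` with the equitable presentation. -/
abbrev Ueq2 (K : Type) [Field K] := RingQuot (TRel K)

def genE (K : Type) [Field K] : Usl2 K := RingQuot.mkAlgHom (Kq K) (SRel K) (ι (Kq K) SGen.E)
def genF (K : Type) [Field K] : Usl2 K := RingQuot.mkAlgHom (Kq K) (SRel K) (ι (Kq K) SGen.F)
def genK (K : Type) [Field K] : Usl2 K := RingQuot.mkAlgHom (Kq K) (SRel K) (ι (Kq K) SGen.K)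
def genKinv (K : Type) [Field K] : Usl2 K := RingQuot.mkAlgHom (Kq K) (SRel K) (ι (Kq K) SGen.Kinv)

def genX (K : Type) [Field K] : Ueq2 K := RingQuot.mkAlgHom (Kq K) (TRel K) (ι (Kq K) TGen.X)
def genXinv (K : Type) [Field K] : Ueq2 K := RingQuot.mkAlgHom (Kq K) (TRel K) (ι (Kq K) TGen.Xinv)
def genY (K : Type) [Field K] : Ueq2 K := RingQuot.mkAlgHom (Kq K) (TRel K) (ι (Kq K) TGen.Y)
def genZ (K : Type) [Field K] : Ueq2 K := RingQuot.mkAlgHom (Kq K) (TRel K) (ι (Kq K) TGen.Z)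

end

/-!
The relations of `U'` say that `X` is invertible and that the `q`-commutators
`q • XY - q⁻¹ • YX`, `q • YZ - q⁻¹ • ZY`, `q • ZX - q⁻¹ • XZ` equal `q - q⁻¹`. An antihomomorphism
is a homomorphism into the opposite algebra, so `S` exists as soon as `X⁻¹, X, 1 + X - YX,
1 + X - ZX` satisfy these relations with all products reversed. Multiplying the relations by `X⁻¹`
gives `X⁻¹YX = q²Y - q(q - q⁻¹)X⁻¹` and `X⁻¹ZX = q⁻¹(q - q⁻¹)X⁻¹ + q⁻²Z`, which settle the two
relations involving `X⁻¹`; the remaining one follows by normal ordering words in `Y < Z < X`.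
Since `θ ∘ S` and `S_std ∘ θ` are both algebra homomorphisms `U' → U_q(sl₂)ᵐᵒᵖ`, they agree once
they agree on the generators, where it is a direct computation using `K⁻¹K = 1` and
`S_std(K⁻¹) = K`.
-/

section Equitable

variable {F A : Type*} [Field F] [Ring A] [Algebra F A]

open MulOpposite

def qComm (q : F) (a b : A) : A := q • (a * b) - q⁻¹ • (b * a)

lemma qComm_op (q : F) (a b : A) : qComm q (op a) (op b) = op (qComm q b a) := by
  simp only [qComm, op_sub, op_smul, op_mul]

lemma map_qComm {B : Type*} [Ring B] [Algebra F B] (f : A →ₐ[F] B) (q : F) (a b : A) :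
    f (qComm q a b) = qComm q (f a) (f b) := by
  simp only [qComm, map_sub, map_smul, map_mul]

/-- The relations of `U'` among `x, x', y, z`, cleared of the denominator `q - q⁻¹`. -/
structure IsEquitable (q : F) (x x' y z : A) : Prop where
  mul_inv : x * x' = 1
  inv_mul : x' * x = 1
  qComm_xy : qComm q x y = (q - q⁻¹) • 1
  qComm_yz : qComm q y z = (q - q⁻¹) • 1
  qComm_zx : qComm q z x = (q - q⁻¹) • 1

namespace IsEquitable

variable {q : F} {x x' y z : A}

lemma x_mul_y_mul (h : IsEquitable q x x' y z) (hq : q ≠ 0) (w : A) :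
    x * (y * w) = (q⁻¹ * (q - q⁻¹)) • w + (q⁻¹ * q⁻¹) • (y * (x * w)) := by
  have hw := congrArg (· * w) h.qComm_xy
  simp only [qComm, sub_mul, smul_mul_assoc, one_mul, mul_assoc] at hw
  linear_combination (norm := skip) q⁻¹ • hw
  match_scalars <;> field_simp <;> ring

lemma x_mul_z_mul (h : IsEquitable q x x' y z) (hq : q ≠ 0) (w : A) :
    x * (z * w) = (q * q) • (z * (x * w)) - (q * (q - q⁻¹)) • w := by
  have hw := congrArg (· * w) h.qComm_zx
  simp only [qComm, sub_mul, smul_mul_assoc, one_mul, mul_assoc] at hw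
  linear_combination (norm := skip) (-q) • hw
  match_scalars <;> field_simp <;> ring

lemma z_mul_y_mul (h : IsEquitable q x x' y z) (hq : q ≠ 0) (w : A) :
    z * (y * w) = (q * q) • (y * (z * w)) - (q * (q - q⁻¹)) • w := by
  have hw := congrArg (· * w) h.qComm_yz
  simp only [qComm, sub_mul, smul_mul_assoc, one_mul, mul_assoc] at hw
  linear_combination (norm := skip) (-q) • hw
  match_scalars <;> field_simp <;> ring

lemma inv_mul_y_mul (h : IsEquitable q x x' y z) (hq : q ≠ 0) :
    x' * (y * x) = (q * q) • y - (q * (q - q⁻¹)) • x' := by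
  have hw := congrArg (x' * ·) h.qComm_xy
  simp only [qComm, mul_sub, mul_smul_comm, mul_one] at hw
  rw [← mul_assoc x' x, h.inv_mul, one_mul] at hw
  linear_combination (norm := skip) (-q) • hw
  match_scalars <;> field_simp <;> ring

lemma inv_mul_z_mul (h : IsEquitable q x x' y z) (hq : q ≠ 0) :
    x' * (z * x) = (q⁻¹ * (q - q⁻¹)) • x' + (q⁻¹ * q⁻¹) • z := by
  have hw := congrArg (x' * ·) h.qComm_zx
  simp only [qComm, mul_sub, mul_smul_comm, mul_one] at hw
  rw [← mul_assoc x' x, h.inv_mul, one_mul] at hw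
  linear_combination (norm := skip) q⁻¹ • hw
  match_scalars <;> field_simp <;> ring

lemma qComm_antipode_xy (h : IsEquitable q x x' y z) (hq : q ≠ 0) :
    qComm q (1 + x - y * x) x' = (q - q⁻¹) • 1 := by
  have hright : (1 + x - y * x) * x' = 1 + x' - y := by
    rw [sub_mul, add_mul, one_mul, h.mul_inv, mul_assoc, h.mul_inv, mul_one]
    abel
  have hleft : x' * (1 + x - y * x) = 1 + x' - x' * (y * x) := by
    rw [mul_sub, mul_add, mul_one, h.inv_mul]
    abel
  rw [qComm, hright, hleft, h.inv_mul_y_mul hq]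
  match_scalars <;> field_simp <;> ring

lemma qComm_antipode_zx (h : IsEquitable q x x' y z) (hq : q ≠ 0) :
    qComm q x' (1 + x - z * x) = (q - q⁻¹) • 1 := by
  have hright : (1 + x - z * x) * x' = 1 + x' - z := by
    rw [sub_mul, add_mul, one_mul, h.mul_inv, mul_assoc, h.mul_inv, mul_one]
    abel
  have hleft : x' * (1 + x - z * x) = 1 + x' - x' * (z * x) := by
    rw [mul_sub, mul_add, mul_one, h.inv_mul]
    abel
  rw [qComm, hright, hleft, h.inv_mul_z_mul hq]
  match_scalars <;> field_simp <;> ring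

/-- The three rules above rewrite every word into the ordered form `y^a z^b x^c`, in which both
sides agree. -/
lemma qComm_antipode_yz (h : IsEquitable q x x' y z) (hq : q ≠ 0) :
    qComm q (1 + x - z * x) (1 + x - y * x) = (q - q⁻¹) • 1 := by
  simp only [qComm, mul_add, add_mul, mul_sub, sub_mul, mul_one, one_mul, mul_assoc,
    h.x_mul_y_mul hq, h.x_mul_z_mul hq, h.z_mul_y_mul hq, mul_smul_comm, smul_add,
    smul_sub, smul_smul]
  match_scalars <;> field_simp <;> ring

theorem antipode (h : IsEquitable q x x' y z) (hq : q ≠ 0) :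
    IsEquitable q (op x') (op x) (op (1 + x - y * x)) (op (1 + x - z * x)) where
  mul_inv := by rw [← op_mul, h.mul_inv, op_one]
  inv_mul := by rw [← op_mul, h.inv_mul, op_one]
  qComm_xy := by rw [qComm_op, h.qComm_antipode_xy hq, op_smul, op_one]
  qComm_yz := by rw [qComm_op, h.qComm_antipode_yz hq, op_smul, op_one]
  qComm_zx := by rw [qComm_op, h.qComm_antipode_zx hq, op_smul, op_one]

end IsEquitable

end Equitable

section Presentation

variable (K : Type) [Field K]

lemma qv_ne_zero : qv K ≠ 0 := RatFunc.X_ne_zero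

lemma qv_sub_inv_ne_zero : qv K - (qv K)⁻¹ ≠ 0 := by
  intro h
  have hdeg := congrArg RatFunc.intDegree (sub_eq_zero.mp h)
  simp [qv, RatFunc.intDegree_inv, RatFunc.intDegree_X] at hdeg

lemma genK_mul_genKinv : genK K * genKinv K = 1 := by
  simpa [genK, genKinv] using RingQuot.mkAlgHom_rel (Kq K) (SRel.r1a (K := K))

lemma genKinv_mul_genK : genKinv K * genK K = 1 := by
  simpa [genK, genKinv] using RingQuot.mkAlgHom_rel (Kq K) (SRel.r1b (K := K))

lemma qComm_of_TRel {a b : TGen}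
    (h : TRel K ((qv K - (qv K)⁻¹)⁻¹ •
      (qv K • (ι (Kq K) a * ι (Kq K) b) - (qv K)⁻¹ • (ι (Kq K) b * ι (Kq K) a))) 1) :
    qComm (qv K) (RingQuot.mkAlgHom (Kq K) (TRel K) (ι (Kq K) a))
      (RingQuot.mkAlgHom (Kq K) (TRel K) (ι (Kq K) b)) = (qv K - (qv K)⁻¹) • 1 := by
  have hmk := RingQuot.mkAlgHom_rel (Kq K) h
  rw [map_one, map_smul, inv_smul_eq_iff₀ (qv_sub_inv_ne_zero K)] at hmk
  simpa only [qComm, map_sub, map_smul, map_mul] using hmk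

theorem isEquitable_gen : IsEquitable (qv K) (genX K) (genXinv K) (genY K) (genZ K) where
  mul_inv := by simpa [genX, genXinv] using RingQuot.mkAlgHom_rel (Kq K) (TRel.e1a (K := K))
  inv_mul := by simpa [genX, genXinv] using RingQuot.mkAlgHom_rel (Kq K) (TRel.e1b (K := K))
  qComm_xy := qComm_of_TRel K .e2
  qComm_yz := qComm_of_TRel K .e3
  qComm_zx := qComm_of_TRel K .e4

end Presentation

namespace Ueq2

variable {K : Type} [Field K] {B : Type*} [Ring B] [Algebra (Kq K) B]

def genImage (x x' y z : B) : TGen → B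
  | .X => x
  | .Xinv => x'
  | .Y => y
  | .Z => z

noncomputable def lift {x x' y z : B} (h : IsEquitable (qv K) x x' y z) : Ueq2 K →ₐ[Kq K] B :=
  RingQuot.liftAlgHom (Kq K) ⟨FreeAlgebra.lift (Kq K) (genImage x x' y z), by
    rintro _ _ ⟨⟩ <;>
      simp only [← qComm.eq_1, map_qComm, map_mul, map_one, map_smul, lift_ι_apply, genImage,
        h.mul_inv, h.inv_mul, h.qComm_xy, h.qComm_yz, h.qComm_zx,
        inv_smul_smul₀ (qv_sub_inv_ne_zero K)]⟩

section
variable {x x' y z : B} (h : IsEquitable (qv K) x x' y z)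

@[simp] lemma lift_genX : lift h (genX K) = x := by
  simp [lift, genX, RingQuot.liftAlgHom_mkAlgHom_apply, genImage]

@[simp] lemma lift_genXinv : lift h (genXinv K) = x' := by
  simp [lift, genXinv, RingQuot.liftAlgHom_mkAlgHom_apply, genImage]

@[simp] lemma lift_genY : lift h (genY K) = y := by
  simp [lift, genY, RingQuot.liftAlgHom_mkAlgHom_apply, genImage]

@[simp] lemma lift_genZ : lift h (genZ K) = z := by
  simp [lift, genZ, RingQuot.liftAlgHom_mkAlgHom_apply, genImage]

end

lemma algHom_ext {f g : Ueq2 K →ₐ[Kq K] B} (hX : f (genX K) = g (genX K))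
    (hXinv : f (genXinv K) = g (genXinv K)) (hY : f (genY K) = g (genY K))
    (hZ : f (genZ K) = g (genZ K)) : f = g := by
  apply RingQuot.ringQuot_ext'
  apply FreeAlgebra.hom_ext
  funext t
  cases t <;> assumption

variable (K)

open MulOpposite

noncomputable def antipode : Ueq2 K →ₐ[Kq K] (Ueq2 K)ᵐᵒᵖ :=
  lift ((isEquitable_gen K).antipode (qv_ne_zero K))

@[simp] lemma antipode_genX : antipode K (genX K) = op (genXinv K) := lift_genX _

@[simp] lemma antipode_genXinv : antipode K (genXinv K) = op (genX K) := lift_genXinv _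

@[simp] lemma antipode_genY :
    antipode K (genY K) = op (1 + genX K - genY K * genX K) := lift_genY _

@[simp] lemma antipode_genZ :
    antipode K (genZ K) = op (1 + genX K - genZ K * genX K) := lift_genZ _

end Ueq2

/-- The `Neg` instance of `RingQuot` is built over a different ring structure on `𝕂(q)` than the
one `Field` provides, so `neg_mul` does not fire syntactically in `Usl2 K`. -/
lemma Usl2.neg_mul {K : Type} [Field K] (a b : Usl2 K) : -a * b = -(a * b) := _root_.neg_mul a b

open MulOpposite in
/-- There is an algebra antihomomorphism `S` of `U'` (formalized as an
algebra homomorphism `U' → U'ᵐᵒᵖ`) with `S(X) = X⁻¹`, `S(Y) = 1 + X - YX`,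
`S(Z) = 1 + X - ZX`; under the isomorphism `θ : U' → U_q(sl₂)` it corresponds to the
standard antipode of `U_q(sl₂)`. -/
theorem equitable_antipode_sl2 (K : Type) [Field K] :
    ∃ S : Ueq2 K →ₐ[Kq K] (Ueq2 K)ᵐᵒᵖ,
      S (genX K) = op (genXinv K) ∧
      S (genY K) = op (1 + genX K - genY K * genX K) ∧
      S (genZ K) = op (1 + genX K - genZ K * genX K) ∧
      (∀ (θ : Ueq2 K ≃ₐ[Kq K] Usl2 K) (Sstd : Usl2 K →ₐ[Kq K] (Usl2 K)ᵐᵒᵖ),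
        (θ (genX K) = genK K ∧ θ (genXinv K) = genKinv K ∧
          θ (genY K) = genKinv K + (qv K - (qv K)⁻¹) • genF K ∧
          θ (genZ K) = genKinv K - (qv K * (qv K - (qv K)⁻¹)) • (genKinv K * genE K)) →
        (Sstd (genE K) = op (-(genKinv K * genE K)) ∧
          Sstd (genF K) = op (-(genF K * genK K)) ∧
          Sstd (genK K) = op (genKinv K)) →
        ∀ u : Ueq2 K, θ (unop (S u)) = unop (Sstd (θ u))) := by
  refine ⟨Ueq2.antipode K, Ueq2.antipode_genX K, Ueq2.antipode_genY K, Ueq2.antipode_genZ K, ?_⟩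
  rintro θ Sstd ⟨hX, hXinv, hY, hZ⟩ ⟨hE, hF, hK⟩ u
  have hKinv : Sstd (genKinv K) = op (genK K) :=
    left_inv_eq_right_inv (a := Sstd (genK K))
      (by rw [← map_mul, genKinv_mul_genK, map_one])
      (by rw [hK, ← op_mul, genK_mul_genKinv, op_one])
  suffices hcomm : (AlgHom.op θ.toAlgHom).comp (Ueq2.antipode K) = Sstd.comp θ.toAlgHom from
    congrArg unop (AlgHom.congr_fun hcomm u)
  apply Ueq2.algHom_ext <;> apply unop_injective
  · simp [hX, hXinv, hK]
  · simp [hX, hXinv, hKinv]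
  · simp only [AlgHom.coe_comp, Function.comp_apply, Ueq2.antipode_genY, AlgHom.op_apply_apply,
      unop_op, AlgEquiv.coe_toAlgHom, map_sub, map_add, map_one, map_mul, map_smul, hX, hY, hF,
      hKinv, add_mul, genKinv_mul_genK, smul_mul_assoc, unop_add, unop_smul, smul_neg]
    abel
  · simp [hX, hZ, hKinv, hE, sub_mul, Usl2.neg_mul, genKinv_mul_genK]
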